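/- arXiv:2206.04316 — 2 statements merged into one kernel-verified Lean document; each statement's English description precedes it below -/
import Mathlib

section
/- Let a ∈ ℝ^m have i.i.d. N(0,1/m) entries and D ∈ ℝ^{m×m} be diagonal with i.i.d. Bernoulli(1/2) diagonal entries, independent of a. Then P{‖Da‖² > 1/8} ≥ 1 − e^{−m/8} − e^{−m/11}. -/
open MeasureTheory ProbabilityTheory Matrix
open scoped NNReal ENNReal

lemma gauss_int_aux (m : ℕ) (hm : 0 < m) :
    ∫ x, Real.exp (-(m : ℝ) * x ^ 2) ∂(gaussianReal 0 (m : ℝ≥0)⁻¹) = (Real.sqrt 3)⁻¹ := by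
  have hm' : (0:ℝ) < m := Nat.cast_pos.mpr hm
  have hv : ((m : ℝ≥0)⁻¹ : ℝ≥0) ≠ 0 := by positivity
  rw [gaussianReal_of_var_ne_zero 0 hv, gaussianPDF_def]
  have hmeas : Measurable fun x => (gaussianPDFReal 0 (m : ℝ≥0)⁻¹ x).toNNReal :=
    (measurable_gaussianPDFReal 0 _).real_toNNReal
  have heq : (fun x => ENNReal.ofReal (gaussianPDFReal 0 (m : ℝ≥0)⁻¹ x))
      = fun x => ((gaussianPDFReal 0 (m : ℝ≥0)⁻¹ x).toNNReal : ℝ≥0∞) := rfl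
  rw [heq, integral_withDensity_eq_integral_smul hmeas]
  have hcoe : ((((m : ℝ≥0)⁻¹ : ℝ≥0)) : ℝ) = ((m:ℝ))⁻¹ := by
    push_cast; ring
  have hint : ∀ x : ℝ, (gaussianPDFReal 0 (m : ℝ≥0)⁻¹ x).toNNReal • Real.exp (-(m : ℝ) * x ^ 2)
      = (Real.sqrt (2 * Real.pi * (m:ℝ)⁻¹))⁻¹ * Real.exp (-(3 * m / 2) * x ^ 2) := by
    intro x
    rw [NNReal.smul_def, smul_eq_mul, Real.coe_toNNReal _ (gaussianPDFReal_nonneg _ _ _)]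
    unfold gaussianPDFReal
    rw [hcoe, mul_assoc, ← Real.exp_add]
    congr 1
    field_simp
    ring
  simp_rw [hint]
  rw [integral_const_mul, integral_gaussian]
  have h2 : (0:ℝ) < 2 * Real.pi * (m:ℝ)⁻¹ := by positivity
  rw [show Real.pi / (3 * (m:ℝ) / 2) = (2 * Real.pi * (m:ℝ)⁻¹) * 3⁻¹ by field_simp,
    Real.sqrt_mul h2.le, ← mul_assoc, inv_mul_cancel₀ (by positivity), one_mul, Real.sqrt_inv]


lemma hEG_aux {Ω : Type*} [MeasurableSpace Ω] (μ : Measure Ω) [IsProbabilityMeasure μ]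
    (m : ℕ) (r : ℝ) (a : Ω → Fin m → ℝ) (hak : ∀ k, Measurable fun ω => a ω k)
    (haindep : iIndepFun (fun k : Fin m => fun ω => a ω k) μ)
    (hEg : ∀ k, ∫ ω, Real.exp (-(m:ℝ) * (a ω k)^2) ∂μ = r)
    (t : Finset (Fin m)) :
    ∫ ω, ∏ k ∈ t, Real.exp (-(m:ℝ) * (a ω k)^2) ∂μ = r ^ t.card := by
  have hZmeas : ∀ k : Fin m, Measurable (fun ω => -((m:ℝ) * (a ω k)^2)) :=
    fun k => (((hak k).pow_const 2).const_mul _).neg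
  have hZindep : iIndepFun
      (fun k : Fin m => fun ω => -((m:ℝ) * (a ω k)^2)) μ :=
    haindep.comp (fun k (x:ℝ) => -((m:ℝ) * x^2))
      (fun k => ((measurable_id.pow_const 2).const_mul _).neg)
  have hmgf := hZindep.mgf_sum hZmeas t (t := 1)
  have hG1 : ∫ ω, ∏ k ∈ t, Real.exp (-(m:ℝ) * (a ω k)^2) ∂μ
      = mgf (∑ k ∈ t, fun ω => -((m:ℝ) * (a ω k)^2)) μ 1 := by
    unfold mgf
    refine integral_congr_ae (Filter.Eventually.of_forall (fun ω => ?_))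
    simp only [one_mul, Finset.sum_apply]
    rw [← Real.exp_sum]
    congr 1
    refine Finset.sum_congr rfl (fun k _ => by ring)
  rw [hG1, hmgf]
  have hone : ∀ k ∈ t, mgf (fun ω => -((m:ℝ) * (a ω k)^2)) μ 1 = r := by
    intro k _
    unfold mgf
    rw [← hEg k]
    refine integral_congr_ae (Filter.Eventually.of_forall (fun ω => ?_))
    simp only [one_mul]
    congr 1; ring
  rw [Finset.prod_congr rfl hone, Finset.prod_const]

lemma numeric_c_aux : (1 + (Real.sqrt 3)⁻¹) / 2 ≤ Real.exp (-(19 / 88)) := by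
  have hs3 : (5/3 : ℝ) ≤ Real.sqrt 3 := by
    nlinarith [Real.sq_sqrt (by norm_num : (3:ℝ) ≥ 0), Real.sqrt_nonneg 3]
  have h1 : ((Real.sqrt 3)⁻¹ : ℝ) ≤ 3/5 := by
    rw [show (3/5 : ℝ) = (5/3)⁻¹ by norm_num]
    exact inv_anti₀ (by norm_num) hs3
  have hc : (1 + (Real.sqrt 3)⁻¹) / 2 ≤ 4/5 := by linarith
  refine hc.trans ?_
  rw [Real.exp_neg, show (4/5 : ℝ) = (5/4)⁻¹ by norm_num]
  apply inv_anti₀ (Real.exp_pos _)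
  have h2 : Real.exp (19/352) ≤ 352/333 := by
    have h3 := Real.add_one_le_exp (-(19/352 : ℝ))
    have h5 : Real.exp (19/352) = (Real.exp (-(19/352)))⁻¹ := by
      rw [← Real.exp_neg]; norm_num
    rw [h5, show (352/333 : ℝ) = (333/352)⁻¹ by norm_num]
    apply inv_anti₀ (by norm_num)
    linarith
  calc Real.exp (19/88) = Real.exp (19/352) ^ (4:ℕ) := by
        rw [← Real.exp_nat_mul]; norm_num
    _ ≤ (352/333) ^ (4:ℕ) := pow_le_pow_left₀ (Real.exp_nonneg _) h2 4
    _ ≤ 5/4 := by norm_num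

/-- With `a` having i.i.d. `N(0,1/m)` entries and `D` diagonal with i.i.d.
`Bernoulli(1/2)` diagonal entries independent of `a`,
`P(‖Da‖² > 1/8) ≥ 1 - e^{-m/8} - e^{-m/11}`. -/
theorem stmt_8
    {Ω : Type*} [MeasurableSpace Ω] (μ : Measure Ω) [IsProbabilityMeasure μ]
    (m : ℕ) (hm : 0 < m)
    (a : Ω → Fin m → ℝ) (hameas : Measurable a)
    (hadist : ∀ k, Measure.map (fun ω => a ω k) μ = gaussianReal 0 (m : ℝ≥0)⁻¹)
    (haindep : iIndepFun (fun k : Fin m => fun ω => a ω k) μ)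
    (D : Ω → Fin m → ℝ) (hDmeas : Measurable D)
    (hDdist : ∀ k, μ {ω | D ω k = 1} = 1/2 ∧ μ {ω | D ω k = 0} = 1/2)
    (hDindep : iIndepFun (fun k : Fin m => fun ω => D ω k) μ)
    (hDa : IndepFun D a μ) :
    μ {ω | ∑ k, (D ω k * a ω k)^2 > 1/8}
      ≥ 1 - ENNReal.ofReal (Real.exp (-(m : ℝ)/8)) - ENNReal.ofReal (Real.exp (-(m : ℝ)/11)) := by
  classical
  have hDk : ∀ k, Measurable (fun ω => D ω k) := fun k => (measurable_pi_apply k).comp hDmeas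
  have hak : ∀ k, Measurable (fun ω => a ω k) := fun k => (measurable_pi_apply k).comp hameas
  set r : ℝ := (Real.sqrt 3)⁻¹ with hr
  have hr0 : (0:ℝ) ≤ r := by positivity
  have hSmeas : Measurable (fun ω => ∑ k, (D ω k * a ω k)^2) :=
    Finset.measurable_sum _ (fun k _ => ((hDk k).mul (hak k)).pow_const 2)
  -- a.e. the D entries are Boolean
  have hae : ∀ᵐ ω ∂μ, ∀ k, D ω k = 1 ∨ D ω k = 0 := by
    rw [MeasureTheory.ae_all_iff]
    intro k
    have h1 := (hDdist k).1
    have h0 := (hDdist k).2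
    have hms1 : MeasurableSet {ω | D ω k = 1} := (hDk k) (measurableSet_singleton 1)
    have hms0 : MeasurableSet {ω | D ω k = 0} := (hDk k) (measurableSet_singleton 0)
    have hdisj : Disjoint {ω | D ω k = 1} {ω | D ω k = 0} := by
      rw [Set.disjoint_left]
      rintro ω h1' h0'
      simp only [Set.mem_setOf_eq] at h1' h0'
      rw [h1'] at h0'; norm_num at h0'
    have hu : μ ({ω | D ω k = 1} ∪ {ω | D ω k = 0}) = 1 := by
      rw [measure_union hdisj hms0, h1, h0, ENNReal.add_halves]
    rw [ae_iff]
    have hset : {ω | ¬(D ω k = 1 ∨ D ω k = 0)} = ({ω | D ω k = 1} ∪ {ω | D ω k = 0})ᶜ := by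
      ext ω; simp [Set.mem_union, not_or]
    rw [hset, measure_compl (hms1.union hms0) (measure_ne_top _ _), hu, measure_univ, tsub_self]
  -- Gaussian expectation
  have hEgauss : ∀ k, ∫ ω, Real.exp (-(m:ℝ) * (a ω k)^2) ∂μ = r := by
    intro k
    have hmap : ∫ x, Real.exp (-(m:ℝ) * x^2) ∂(Measure.map (fun ω => a ω k) μ)
        = ∫ ω, Real.exp (-(m:ℝ) * (a ω k)^2) ∂μ := by
      rw [integral_map (hak k).aemeasurable]
      exact (Real.measurable_exp.comp ((measurable_id.pow_const 2).const_mul _)).aestronglyMeasurable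
    rw [← hmap, hadist k, gauss_int_aux m hm]
  -- the two factor families
  set F : Finset (Fin m) → Ω → ℝ :=
    fun t ω => (∏ k ∈ t, D ω k) * ∏ k ∈ Finset.univ \ t, (1 - D ω k) with hF
  set G : Finset (Fin m) → Ω → ℝ :=
    fun t ω => ∏ k ∈ t, Real.exp (-(m:ℝ) * (a ω k)^2) with hG
  have hFmeas : ∀ t, Measurable (F t) := fun t =>
    (Finset.measurable_prod _ (fun k _ => hDk k)).mul
      (Finset.measurable_prod _ (fun k _ => (measurable_const.sub (hDk k))))
  have hGmeas : ∀ t, Measurable (G t) := fun t =>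
    Finset.measurable_prod _ (fun k _ =>
      Real.measurable_exp.comp (((hak k).pow_const 2).const_mul _))
  -- F t is a.e. an indicator
  have hEF : ∀ t : Finset (Fin m), ∫ ω, F t ω ∂μ = (2⁻¹ : ℝ)^m := by
    intro t
    set s : Fin m → Set Ω := fun k => (fun ω => D ω k) ⁻¹' {if k ∈ t then (1:ℝ) else 0} with hs
    have hFind : F t =ᵐ[μ] Set.indicator (⋂ k, s k) 1 := by
      filter_upwards [hae] with ω hω
      by_cases hmem : ω ∈ ⋂ k, s k
      · rw [Set.indicator_of_mem hmem]
        simp only [hs, Set.mem_iInter, Set.mem_preimage, Set.mem_singleton_iff] at hmem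
        have h1 : ∏ k ∈ t, D ω k = 1 :=
          Finset.prod_eq_one (fun k hk => by rw [hmem k, if_pos hk])
        have h2 : ∏ k ∈ Finset.univ \ t, (1 - D ω k) = 1 :=
          Finset.prod_eq_one (fun k hk => by
            rw [hmem k, if_neg (Finset.mem_sdiff.mp hk).2]; ring)
        simp [hF, h1, h2]
      · rw [Set.indicator_of_notMem hmem]
        simp only [hs, Set.mem_iInter, Set.mem_preimage, Set.mem_singleton_iff,
          not_forall] at hmem
        obtain ⟨k, hk⟩ := hmem
        by_cases hkt : k ∈ t
        · rw [if_pos hkt] at hk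
          have hD0 : D ω k = 0 := (hω k).resolve_left hk
          have hz : ∏ k ∈ t, D ω k = 0 := Finset.prod_eq_zero hkt hD0
          simp [hF, hz]
        · rw [if_neg hkt] at hk
          have hD1 : D ω k = 1 := (hω k).resolve_right hk
          have hz : ∏ k ∈ Finset.univ \ t, (1 - D ω k) = 0 :=
            Finset.prod_eq_zero (Finset.mem_sdiff.mpr ⟨Finset.mem_univ k, hkt⟩)
              (by rw [hD1]; ring)
          simp [hF, hz]
    have hsm : ∀ k, MeasurableSet (s k) := fun k => (hDk k) (measurableSet_singleton _)
    rw [integral_congr_ae hFind, integral_indicator_one (MeasurableSet.iInter hsm)]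
    have hmeasInter : μ (⋂ k, s k) = ∏ k : Fin m, μ (s k) := by
      refine hDindep.meas_iInter (fun k => ?_)
      exact ⟨{if k ∈ t then (1:ℝ) else 0}, measurableSet_singleton _, rfl⟩
    have hhalf : ∀ k : Fin m, μ (s k) = 1/2 := by
      intro k
      by_cases hkt : k ∈ t
      · simpa [hs, hkt, Set.preimage, Set.mem_singleton_iff] using (hDdist k).1
      · simpa [hs, hkt, Set.preimage, Set.mem_singleton_iff] using (hDdist k).2
    rw [measureReal_def, hmeasInter]
    simp only [hhalf, Finset.prod_const, Finset.card_univ, Fintype.card_fin]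
    rw [show (1/2 : ℝ≥0∞) = 2⁻¹ by norm_num, ENNReal.toReal_pow]
    norm_num
  -- G t expectation via mgf_sum
  have hEG : ∀ t : Finset (Fin m), ∫ ω, G t ω ∂μ = r ^ t.card :=
    fun t => hEG_aux μ m r a hak haindep hEgauss t
  -- a.e. product expansion
  have hYeq : ∀ᵐ ω ∂μ, Real.exp (-(m:ℝ) * ∑ k, (D ω k * a ω k)^2)
      = ∑ t ∈ (Finset.univ : Finset (Fin m)).powerset, F t ω * G t ω := by
    filter_upwards [hae] with ω hω
    have h1 : Real.exp (-(m:ℝ) * ∑ k, (D ω k * a ω k)^2)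
        = ∏ k, Real.exp (-(m:ℝ) * (D ω k * a ω k)^2) := by
      rw [← Real.exp_sum, Finset.mul_sum]
    have h2 : ∀ k : Fin m, Real.exp (-(m:ℝ) * (D ω k * a ω k)^2)
        = D ω k * Real.exp (-(m:ℝ) * (a ω k)^2) + (1 - D ω k) := by
      intro k
      rcases hω k with h | h
      · rw [h]; simp
      · rw [h]; simp
    rw [h1, Finset.prod_congr rfl (fun k _ => h2 k), Finset.prod_add]
    refine Finset.sum_congr rfl (fun t _ => ?_)
    rw [Finset.prod_mul_distrib]
    simp only [hF, hG]
    ring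
  -- integrability of each term
  have hFGint : ∀ t : Finset (Fin m), Integrable (fun ω => F t ω * G t ω) μ := by
    intro t
    refine Integrable.mono' (integrable_const 1)
      ((hFmeas t).mul (hGmeas t)).aestronglyMeasurable ?_
    filter_upwards [hae] with ω hω
    have hF01 : 0 ≤ F t ω ∧ F t ω ≤ 1 := by
      constructor
      · refine mul_nonneg (Finset.prod_nonneg fun k _ => ?_) (Finset.prod_nonneg fun k _ => ?_)
        · rcases hω k with h | h <;> rw [h] <;> norm_num
        · rcases hω k with h | h <;> rw [h] <;> norm_num
      · calc F t ω ≤ 1 * 1 := by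
              refine mul_le_mul ?_ ?_ (Finset.prod_nonneg fun k _ => ?_) zero_le_one
              · refine Finset.prod_le_one (fun k _ => ?_) (fun k _ => ?_)
                · rcases hω k with h | h <;> rw [h] <;> norm_num
                · rcases hω k with h | h <;> rw [h] <;> norm_num
              · refine Finset.prod_le_one (fun k _ => ?_) (fun k _ => ?_)
                · rcases hω k with h | h <;> rw [h] <;> norm_num
                · rcases hω k with h | h <;> rw [h] <;> norm_num
              · rcases hω k with h | h <;> rw [h] <;> norm_num
          _ = 1 := by norm_num
    have hG01 : 0 ≤ G t ω ∧ G t ω ≤ 1 := by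
      constructor
      · exact Finset.prod_nonneg fun k _ => (Real.exp_pos _).le
      · refine Finset.prod_le_one (fun k _ => (Real.exp_pos _).le) (fun k _ => ?_)
        rw [Real.exp_le_one_iff]
        nlinarith [sq_nonneg (a ω k), (Nat.cast_nonneg m : (0:ℝ) ≤ m)]
    rw [Real.norm_eq_abs, abs_mul, abs_of_nonneg hF01.1, abs_of_nonneg hG01.1]
    calc F t ω * G t ω ≤ 1 * 1 := mul_le_mul hF01.2 hG01.2 hG01.1 zero_le_one
      _ = 1 := by norm_num
  -- the key expectation identity
  have key : ∫ ω, Real.exp (-(m:ℝ) * ∑ k, (D ω k * a ω k)^2) ∂μ = ((1 + r)/2)^m := by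
    rw [integral_congr_ae hYeq, integral_finset_sum _ (fun t _ => hFGint t)]
    have hterm : ∀ t ∈ (Finset.univ : Finset (Fin m)).powerset,
        ∫ ω, F t ω * G t ω ∂μ = (2⁻¹:ℝ)^m * r ^ t.card := by
      intro t _
      have hφmeas : Measurable (fun x : Fin m → ℝ =>
          (∏ k ∈ t, x k) * ∏ k ∈ Finset.univ \ t, (1 - x k)) :=
        (Finset.measurable_prod _ (fun k _ => measurable_pi_apply k)).mul
          (Finset.measurable_prod _ (fun k _ => measurable_const.sub (measurable_pi_apply k)))
      have hψmeas : Measurable (fun x : Fin m → ℝ =>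
          ∏ k ∈ t, Real.exp (-(m:ℝ) * (x k)^2)) :=
        Finset.measurable_prod _ (fun k _ =>
          Real.measurable_exp.comp (((measurable_pi_apply k).pow_const 2).const_mul _))
      have hindep : IndepFun (F t) (G t) μ := hDa.comp hφmeas hψmeas
      have := hindep.integral_mul_eq_mul_integral (hFmeas t).aestronglyMeasurable (hGmeas t).aestronglyMeasurable
      rw [show (fun ω => F t ω * G t ω) = F t * G t from rfl, this, hEF t, hEG t]
    rw [Finset.sum_congr rfl hterm, ← Finset.mul_sum]
    have hps : ∑ t ∈ (Finset.univ : Finset (Fin m)).powerset, r ^ t.card = (r + 1)^m := by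
      have hpa := Finset.prod_add (fun _ : Fin m => r) (fun _ => (1:ℝ)) Finset.univ
      simp only [Finset.prod_const, Finset.card_univ, Fintype.card_fin, one_pow, mul_one] at hpa
      exact hpa.symm
    rw [hps, ← mul_pow]
    congr 1
    ring
  -- Markov inequality
  set e8 := ENNReal.ofReal (Real.exp (-(m:ℝ)/8)) with he8
  set e11 := ENNReal.ofReal (Real.exp (-(m:ℝ)/11)) with he11
  have he8ne0 : e8 ≠ 0 := by
    rw [he8]; simp [Real.exp_pos]
  have he8netop : e8 ≠ ∞ := ENNReal.ofReal_ne_top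
  set Y : Ω → ℝ := fun ω => Real.exp (-(m:ℝ) * ∑ k, (D ω k * a ω k)^2) with hY
  have hYmeas : Measurable Y := Real.measurable_exp.comp (hSmeas.const_mul _)
  have hYnn : ∀ ω, 0 ≤ Y ω := fun ω => (Real.exp_pos _).le
  have hYle : ∀ ω, Y ω ≤ 1 := by
    intro ω
    rw [hY, Real.exp_le_one_iff]
    have hs0 : (0:ℝ) ≤ ∑ k, (D ω k * a ω k)^2 := Finset.sum_nonneg fun k _ => sq_nonneg _
    nlinarith [(Nat.cast_nonneg m : (0:ℝ) ≤ m)]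
  have hYint : Integrable Y μ := by
    refine Integrable.mono' (integrable_const 1) hYmeas.aestronglyMeasurable ?_
    exact Filter.Eventually.of_forall fun ω => by
      rw [Real.norm_eq_abs, abs_of_nonneg (hYnn ω)]; exact hYle ω
  have hμA : μ {ω | ∑ k, (D ω k * a ω k)^2 ≤ (1:ℝ)/8} ≤ e11 := by
    have hsub : {ω | ∑ k, (D ω k * a ω k)^2 ≤ (1:ℝ)/8}
        ⊆ {ω | e8 ≤ ENNReal.ofReal (Y ω)} := by
      intro ω hω
      simp only [Set.mem_setOf_eq] at hω ⊢
      rw [he8]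
      apply ENNReal.ofReal_le_ofReal
      rw [hY]
      apply Real.exp_le_exp.mpr
      have hmnn : (0:ℝ) ≤ m := (Nat.cast_nonneg m : (0:ℝ) ≤ m)
      nlinarith
    calc μ {ω | ∑ k, (D ω k * a ω k)^2 ≤ (1:ℝ)/8}
        ≤ μ {ω | e8 ≤ ENNReal.ofReal (Y ω)} := measure_mono hsub
      _ ≤ (∫⁻ ω, ENNReal.ofReal (Y ω) ∂μ) / e8 := by
          rw [ENNReal.le_div_iff_mul_le (Or.inl he8ne0) (Or.inl he8netop), mul_comm]
          exact mul_meas_ge_le_lintegral₀ hYmeas.ennreal_ofReal.aemeasurable e8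
      _ = ENNReal.ofReal (((1 + r)/2)^m) / e8 := by
          rw [← ofReal_integral_eq_lintegral_ofReal hYint
            (Filter.Eventually.of_forall hYnn), key]
      _ ≤ e11 := by
          rw [ENNReal.div_le_iff he8ne0 he8netop, he11, he8,
            ← ENNReal.ofReal_mul (Real.exp_nonneg _)]
          apply ENNReal.ofReal_le_ofReal
          rw [← Real.exp_add]
          calc ((1 + r)/2)^m ≤ (Real.exp (-(19/88)))^m :=
                pow_le_pow_left₀ (by positivity) numeric_c_aux m
            _ = Real.exp (-(m:ℝ)/11 + -(m:ℝ)/8) := by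
                rw [← Real.exp_nat_mul]; congr 1; ring
  -- conclude
  have hAmeas : MeasurableSet {ω | ∑ k, (D ω k * a ω k)^2 ≤ (1:ℝ)/8} :=
    measurableSet_le hSmeas measurable_const
  have hcompl : {ω | ∑ k, (D ω k * a ω k)^2 ≤ (1:ℝ)/8}ᶜ
      = {ω | ∑ k, (D ω k * a ω k)^2 > 1/8} := by
    ext ω; simp [not_le]
  have hμT : μ {ω | ∑ k, (D ω k * a ω k)^2 > 1/8}
      = 1 - μ {ω | ∑ k, (D ω k * a ω k)^2 ≤ (1:ℝ)/8} := by
    rw [← hcompl, prob_compl_eq_one_sub hAmeas]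
  rw [hμT]
  calc 1 - e8 - e11 ≤ 1 - e11 := tsub_le_tsub_right (tsub_le_self) e11
    _ ≤ 1 - μ {ω | ∑ k, (D ω k * a ω k)^2 ≤ (1:ℝ)/8} := tsub_le_tsub_left hμA 1
end

section
/- Let X₁, ..., X_N be independent centered sub-exponential random variables and K = max_i ‖X_i‖_{ψ₁}. Then for every ε ≥ 0, P{|Σ_{i=1}^N X_i| ≥ ε N} ≤ 2 exp(−c min(ε²/K², ε/K) N) for an absolute constant c > 0. -/
/-!
The moment bounds `E|X|^n ≤ (K n)^n` and `n^n / n! ≤ e^n` dominate the Taylor coefficients of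
`E exp(t|X|)` by `(e t K)^n`. For centered `X` the linear term of `E exp(tX)` vanishes, so
`E exp(tX) ≤ 1 + 2 (e t K)^2 ≤ exp(2 (e t K)^2)` whenever `0 ≤ t ≤ 1 / (2 e K)`. Independence
multiplies these bounds, and Chernoff's bound for `± ∑ Xᵢ` at `t = min(ε / (4 e² K²), 1 / (2 e K))`
gives the inequality with `c = 1 / (8 e²)`.
-/

open MeasureTheory ProbabilityTheory

/-- The sub-exponential norm `‖X‖_{ψ₁} = sup_{p ≥ 1} p⁻¹ (E|X|^p)^{1/p}`. -/
noncomputable def subExpNorm {Ω : Type*} [MeasurableSpace Ω] (μ : Measure Ω) (X : Ω → ℝ) : ℝ :=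
  sSup {y : ℝ | ∃ p : ℝ, 1 ≤ p ∧ y = p⁻¹ * (∫ ω, |X ω| ^ p ∂μ) ^ (1/p)}

/-- A real random variable is sub-exponential if all its moments are finite and its
sub-exponential norm is finite (the defining supremum is attained over a bounded set). -/
def IsSubExponential {Ω : Type*} [MeasurableSpace Ω] (μ : Measure Ω) (X : Ω → ℝ) : Prop :=
  (∀ p : ℝ, 1 ≤ p → Integrable (fun ω => |X ω| ^ p) μ) ∧
  BddAbove {y : ℝ | ∃ p : ℝ, 1 ≤ p ∧ y = p⁻¹ * (∫ ω, |X ω| ^ p ∂μ) ^ (1/p)}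

open Real

section SubExponential

variable {Ω : Type*} [MeasurableSpace Ω] {μ : Measure Ω} {X : Ω → ℝ} {K : ℝ}

lemma subExpNorm_nonneg : 0 ≤ subExpNorm μ X :=
  Real.sSup_nonneg fun _ ⟨p, _, hy⟩ => hy ▸ by
    have : 0 ≤ ∫ ω, |X ω| ^ p ∂μ := integral_nonneg fun ω => by positivity
    positivity

lemma subExpNorm_neg : subExpNorm μ (-X) = subExpNorm μ X := by
  simp [subExpNorm]

lemma IsSubExponential.neg (hX : IsSubExponential μ X) : IsSubExponential μ (-X) := by
  simpa [IsSubExponential] using hX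

lemma IsSubExponential.integral_abs_rpow_le (hX : IsSubExponential μ X)
    (hK : subExpNorm μ X ≤ K) {p : ℝ} (hp : 1 ≤ p) :
    ∫ ω, |X ω| ^ p ∂μ ≤ (K * p) ^ p := by
  have hp0 : 0 < p := by linarith
  have hI : 0 ≤ ∫ ω, |X ω| ^ p ∂μ := integral_nonneg fun ω => by positivity
  have hle : p⁻¹ * (∫ ω, |X ω| ^ p ∂μ) ^ (1 / p) ≤ K := (le_csSup hX.2 ⟨p, hp, rfl⟩).trans hK
  rw [inv_mul_le_iff₀ hp0, mul_comm p, one_div] at hle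
  calc ∫ ω, |X ω| ^ p ∂μ = ((∫ ω, |X ω| ^ p ∂μ) ^ p⁻¹) ^ p := (rpow_inv_rpow hI hp0.ne').symm
    _ ≤ (K * p) ^ p := by gcongr

lemma IsSubExponential.integrable_abs_pow [IsFiniteMeasure μ] (hX : IsSubExponential μ X)
    (n : ℕ) : Integrable (fun ω => |X ω| ^ n) μ := by
  rcases Nat.eq_zero_or_pos n with rfl | hn
  · simp
  · simpa [rpow_natCast] using hX.1 n (by exact_mod_cast hn)

lemma IsSubExponential.integral_abs_pow_le [IsProbabilityMeasure μ] (hX : IsSubExponential μ X)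
    (hK : subExpNorm μ X ≤ K) (n : ℕ) : ∫ ω, |X ω| ^ n ∂μ ≤ (K * n) ^ n := by
  rcases Nat.eq_zero_or_pos n with rfl | hn
  · simp
  · simpa [rpow_natCast] using hX.integral_abs_rpow_le hK (p := n) (by exact_mod_cast hn)

end SubExponential

section Series

variable {Ω : Type*} [MeasurableSpace Ω] {μ : Measure Ω}

lemma integrable_and_hasSum_integral_of_hasSum_of_nonneg {f : ℕ → Ω → ℝ} {g : Ω → ℝ}
    (hg : AEStronglyMeasurable g μ) (hfg : ∀ ω, HasSum (fun n => f n ω) (g ω))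
    (hf : ∀ n, Integrable (f n) μ) (hf0 : ∀ n ω, 0 ≤ f n ω)
    (hsum : Summable fun n => ∫ ω, f n ω ∂μ) :
    Integrable g μ ∧ HasSum (fun n => ∫ ω, f n ω ∂μ) (∫ ω, g ω ∂μ) := by
  have hg0 : ∀ ω, 0 ≤ g ω := fun ω => (hfg ω).nonneg fun n => hf0 n ω
  have hlin : ∫⁻ ω, ENNReal.ofReal (g ω) ∂μ = ENNReal.ofReal (∑' n, ∫ ω, f n ω ∂μ) := by
    calc ∫⁻ ω, ENNReal.ofReal (g ω) ∂μ = ∫⁻ ω, ∑' n, ENNReal.ofReal (f n ω) ∂μ := by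
          refine lintegral_congr fun ω => ?_
          rw [← (hfg ω).tsum_eq, ENNReal.ofReal_tsum_of_nonneg (hf0 · ω) (hfg ω).summable]
      _ = ∑' n, ∫⁻ ω, ENNReal.ofReal (f n ω) ∂μ :=
          lintegral_tsum fun n => (hf n).aemeasurable.ennreal_ofReal
      _ = ∑' n, ENNReal.ofReal (∫ ω, f n ω ∂μ) := by
          congr 1 with n
          exact (ofReal_integral_eq_lintegral_ofReal (hf n) (ae_of_all _ (hf0 n))).symm
      _ = _ := (ENNReal.ofReal_tsum_of_nonneg (fun n => integral_nonneg (hf0 n)) hsum).symm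
  refine ⟨⟨hg, ?_⟩, ?_⟩
  · rw [hasFiniteIntegral_iff_ofReal (ae_of_all _ hg0), hlin]
    exact ENNReal.ofReal_lt_top
  · have := hasSum_integral_of_summable_integral_norm hf
      (by simpa only [Real.norm_of_nonneg (hf0 _ _)] using hsum)
    simpa only [fun ω => (hfg ω).tsum_eq] using this

lemma integrable_exp_mul_abs_and_hasSum {X : Ω → ℝ} (hXm : AEMeasurable X μ)
    (hX : ∀ n : ℕ, Integrable (fun ω => |X ω| ^ n) μ) {t : ℝ} (ht : 0 ≤ t)
    (hsum : Summable fun n : ℕ => t ^ n / n.factorial * ∫ ω, |X ω| ^ n ∂μ) :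
    Integrable (fun ω => exp (t * |X ω|)) μ ∧
      HasSum (fun n : ℕ => t ^ n / n.factorial * ∫ ω, |X ω| ^ n ∂μ)
        (∫ ω, exp (t * |X ω|) ∂μ) := by
  simp_rw [← integral_const_mul] at hsum ⊢
  refine integrable_and_hasSum_integral_of_hasSum_of_nonneg
    (hXm.abs.const_mul t).exp.aestronglyMeasurable (fun ω => ?_) (fun n => (hX n).const_mul _)
    (fun n ω => by positivity) hsum
  have := NormedSpace.expSeries_div_hasSum_exp (t * |X ω|)
  rw [← Real.exp_eq_exp_ℝ] at this
  simpa only [mul_pow, mul_div_right_comm] using this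

end Series

section MGF

variable {Ω : Type*} [MeasurableSpace Ω] {μ : Measure Ω} {X : Ω → ℝ}

lemma exp_sub_le_exp_abs_sub_abs (u : ℝ) : exp u - u ≤ exp |u| - |u| := by
  rcases le_or_gt 0 u with hu | hu
  · rw [abs_of_nonneg hu]
  · have := sinh_lt_self_iff.mpr hu
    rw [sinh_eq] at this
    rw [abs_of_neg hu]
    linarith

lemma integrable_exp_mul_and_integral_le_of_integral_eq_zero (hX : Integrable X μ)
    (hmean : ∫ ω, X ω ∂μ = 0) {t : ℝ} (ht : 0 ≤ t)
    (habs : Integrable (fun ω => exp (t * |X ω|)) μ) :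
    Integrable (fun ω => exp (t * X ω)) μ ∧
      ∫ ω, exp (t * X ω) ∂μ ≤ ∫ ω, exp (t * |X ω|) ∂μ - t * ∫ ω, |X ω| ∂μ := by
  have hint : Integrable (fun ω => exp (t * X ω)) μ := by
    refine habs.mono' (hX.aemeasurable.const_mul t).exp.aestronglyMeasurable (ae_of_all _ ?_)
    intro ω
    rw [Real.norm_of_nonneg (exp_pos _).le]
    gcongr
    exact le_abs_self _
  refine ⟨hint, ?_⟩
  have hpt : ∀ ω, exp (t * X ω) ≤ t * X ω + (exp (t * |X ω|) - t * |X ω|) := fun ω => by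
    have := exp_sub_le_exp_abs_sub_abs (t * X ω)
    rw [abs_mul, abs_of_nonneg ht] at this
    linarith
  have hrest : Integrable (fun ω => exp (t * |X ω|) - t * |X ω|) μ :=
    habs.sub (hX.abs.const_mul t)
  calc ∫ ω, exp (t * X ω) ∂μ ≤ ∫ ω, t * X ω + (exp (t * |X ω|) - t * |X ω|) ∂μ :=
        integral_mono hint ((hX.const_mul t).add hrest) hpt
    _ = ∫ ω, exp (t * |X ω|) ∂μ - t * ∫ ω, |X ω| ∂μ := by
        rw [integral_add (hX.const_mul t) hrest, integral_sub habs (hX.abs.const_mul t),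
          integral_const_mul, integral_const_mul, hmean, mul_zero, zero_add]

lemma HasSum.le_one_add_add_two_mul_sq {a : ℕ → ℝ} {S q : ℝ} (ha : HasSum a S) (ha0 : a 0 = 1)
    (hq0 : 0 ≤ q) (hq : q ≤ 1 / 2) (haq : ∀ n, a n ≤ q ^ n) : S ≤ 1 + a 1 + 2 * q ^ 2 := by
  have hgeom : Summable fun n => q ^ (n + 2) :=
    (summable_nat_add_iff 2).mpr (summable_geometric_of_lt_one hq0 (by linarith))
  have htail : ∑' n, a (n + 2) ≤ 2 * q ^ 2 :=
    calc ∑' n, a (n + 2) ≤ ∑' n, q ^ (n + 2) :=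
          Summable.tsum_le_tsum (fun n => haq _) ((summable_nat_add_iff 2).mpr ha.summable) hgeom
      _ = q ^ 2 * (1 - q)⁻¹ := by
          rw [show (fun n => q ^ (n + 2)) = fun n => q ^ 2 * q ^ n from funext fun n => by ring,
            tsum_mul_left, tsum_geometric_of_lt_one hq0 (by linarith)]
      _ ≤ q ^ 2 * 2 := by
          gcongr
          rw [inv_le_comm₀ (by linarith) two_pos]
          linarith
      _ = 2 * q ^ 2 := mul_comm _ _
  rw [← ha.tsum_eq, ← ha.summable.sum_add_tsum_nat_add 2]
  simp only [Finset.sum_range_succ, Finset.sum_range_zero, ha0]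
  linarith

lemma pow_div_factorial_le_exp_one_pow (n : ℕ) : (n : ℝ) ^ n / n.factorial ≤ exp 1 ^ n := by
  simpa [← exp_nat_mul] using pow_div_factorial_le_exp _ (Nat.cast_nonneg n) n

lemma IsSubExponential.mgf_le [IsProbabilityMeasure μ] (hX : IsSubExponential μ X)
    (hXm : AEMeasurable X μ) {K : ℝ} (hK : subExpNorm μ X ≤ K) (hmean : ∫ ω, X ω ∂μ = 0)
    {t : ℝ} (ht : 0 ≤ t) (htK : exp 1 * t * K ≤ 1 / 2) :
    Integrable (fun ω => exp (t * X ω)) μ ∧ mgf X μ t ≤ exp (2 * (exp 1 * t * K) ^ 2) := by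
  set q := exp 1 * t * K
  have hK0 : 0 ≤ K := subExpNorm_nonneg.trans hK
  have hq0 : 0 ≤ q := by positivity
  set a : ℕ → ℝ := fun n => t ^ n / n.factorial * ∫ ω, |X ω| ^ n ∂μ
  have haq : ∀ n, a n ≤ q ^ n := fun n =>
    calc a n ≤ t ^ n / n.factorial * (K * n) ^ n :=
          mul_le_mul_of_nonneg_left (hX.integral_abs_pow_le hK n) (by positivity)
      _ = (t * K) ^ n * ((n : ℝ) ^ n / n.factorial) := by ring
      _ ≤ (t * K) ^ n * exp 1 ^ n := by
          have : 0 ≤ t * K := by positivity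
          gcongr
          exact pow_div_factorial_le_exp_one_pow n
      _ = q ^ n := by ring
  have ha0 : ∀ n, 0 ≤ a n := fun n => by
    have : 0 ≤ ∫ ω, |X ω| ^ n ∂μ := integral_nonneg fun ω => by positivity
    positivity
  obtain ⟨habs, hsum⟩ := integrable_exp_mul_abs_and_hasSum hXm hX.integrable_abs_pow ht
    (Summable.of_nonneg_of_le ha0 haq (summable_geometric_of_lt_one hq0 (by linarith)))
  have hX1 : Integrable X μ :=
    (integrable_norm_iff hXm.aestronglyMeasurable).1 (by simpa using hX.integrable_abs_pow 1)
  obtain ⟨hint, hle⟩ := integrable_exp_mul_and_integral_le_of_integral_eq_zero hX1 hmean ht habs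
  refine ⟨hint, ?_⟩
  have hS : _ ≤ 1 + a 1 + 2 * q ^ 2 := hsum.le_one_add_add_two_mul_sq (by simp) hq0 htK haq
  have ha1 : a 1 = t * ∫ ω, |X ω| ∂μ := by simp [a]
  calc mgf X μ t ≤ 1 + 2 * q ^ 2 := by simp only [mgf]; linarith
    _ ≤ exp (2 * q ^ 2) := by linarith [add_one_le_exp (2 * q ^ 2)]

end MGF

lemma neg_mul_add_two_mul_sq_le_of_eq_min {a K ε t : ℝ} (ha : 1 / 2 ≤ a) (hK : 0 < K)
    (hε : 0 ≤ ε) (ht : t = min (ε / (4 * (a * K) ^ 2)) (1 / (2 * (a * K)))) :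
    -t * ε + 2 * (a * t * K) ^ 2 ≤ -(8 * a ^ 2)⁻¹ * min (ε ^ 2 / K ^ 2) (ε / K) := by
  have ht0 : 0 ≤ t := ht ▸ le_min (by positivity) (by positivity)
  have hquad : 2 * (a * t * K) ^ 2 ≤ t * ε / 2 := by
    have : t * (4 * (a * K) ^ 2) ≤ ε :=
      (le_div_iff₀ (by positivity)).1 (ht ▸ min_le_left _ _)
    nlinarith
  have hmin : (8 * a ^ 2)⁻¹ * min (ε ^ 2 / K ^ 2) (ε / K) ≤ t * ε / 2 := by
    rw [ht, mul_min_of_nonneg _ _ (by positivity), mul_div_assoc,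
      min_mul_of_nonneg _ _ (by positivity)]
    apply min_le_min
    · field_simp
      linarith
    · field_simp
      nlinarith
  linarith

section Tail

variable {Ω : Type*} [MeasurableSpace Ω] {μ : Measure Ω} {ι : Type*} [Fintype ι]
  {X : ι → Ω → ℝ} {t B : ℝ}

lemma measure_sum_ge_le_of_mgf_le (hXm : ∀ i, Measurable (X i)) (hind : iIndepFun X μ)
    (ht : 0 ≤ t) (hX : ∀ i, Integrable (fun ω => exp (t * X i ω)) μ ∧ mgf (X i) μ t ≤ exp B)
    (a : ℝ) :
    μ {ω | a ≤ ∑ i, X i ω} ≤ ENNReal.ofReal (exp (-t * a + B * Fintype.card ι)) := by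
  have := hind.isProbabilityMeasure
  have hmgf : mgf (∑ i, X i) μ t ≤ exp (B * Fintype.card ι) :=
    calc mgf (∑ i, X i) μ t = ∏ i, mgf (X i) μ t := hind.mgf_sum hXm _
      _ ≤ ∏ _i : ι, exp B := Finset.prod_le_prod (fun _ _ => mgf_nonneg) fun i _ => (hX i).2
      _ = exp (B * Fintype.card ι) := by simp [← exp_nat_mul, mul_comm]
  have hchernoff := measure_ge_le_exp_mul_mgf (X := ∑ i, X i) a ht
    (hind.integrable_exp_mul_sum hXm (s := Finset.univ) fun i _ => (hX i).1)
  simp only [Finset.sum_apply] at hchernoff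
  rw [ENNReal.le_ofReal_iff_toReal_le (measure_ne_top _ _) (exp_pos _).le, exp_add]
  exact hchernoff.trans (by gcongr)

lemma measure_abs_sum_ge_le_of_mgf_le (hXm : ∀ i, Measurable (X i)) (hind : iIndepFun X μ)
    (ht : 0 ≤ t) (hX : ∀ i, Integrable (fun ω => exp (t * X i ω)) μ ∧ mgf (X i) μ t ≤ exp B)
    (hnegX : ∀ i, Integrable (fun ω => exp (t * (-X i) ω)) μ ∧ mgf (-X i) μ t ≤ exp B)
    (a : ℝ) :
    μ {ω | a ≤ |∑ i, X i ω|} ≤ ENNReal.ofReal (2 * exp (-t * a + B * Fintype.card ι)) := by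
  have hupper := measure_sum_ge_le_of_mgf_le hXm hind ht hX a
  have hlower := measure_sum_ge_le_of_mgf_le (fun i => (hXm i).neg)
    (hind.comp (fun _ => Neg.neg) fun _ => measurable_neg) ht hnegX a
  have hsplit : {ω | a ≤ |∑ i, X i ω|} ⊆ {ω | a ≤ ∑ i, X i ω} ∪ {ω | a ≤ ∑ i, (-X i) ω} := by
    intro ω hω
    simpa [le_abs', Finset.sum_neg_distrib, le_neg, or_comm] using hω
  calc μ {ω | a ≤ |∑ i, X i ω|}
      ≤ μ {ω | a ≤ ∑ i, X i ω} + μ {ω | a ≤ ∑ i, (-X i) ω} :=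
        (measure_mono hsplit).trans (measure_union_le _ _)
    _ ≤ _ := by
        rw [two_mul, ENNReal.ofReal_add (exp_pos _).le (exp_pos _).le]
        exact add_le_add hupper hlower

end Tail

/-- Bernstein's inequality for sub-exponential random variables, Vershynin
Cor. 5.17: there is an absolute constant `c > 0` such that for independent centered
sub-exponential `X₁, …, X_N` with `K = max_i ‖X_i‖_{ψ₁}`, for every `ε ≥ 0`,
`P(|Σ X_i| ≥ ε N) ≤ 2 exp(-c min(ε²/K², ε/K) N)`. -/
theorem stmt_10 :
    ∃ c : ℝ, 0 < c ∧
      ∀ (Ω : Type) (_ : MeasurableSpace Ω) (μ : Measure Ω), IsProbabilityMeasure μ →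
        ∀ (N : ℕ), 0 < N →
        ∀ (X : Fin N → Ω → ℝ), (∀ i, Measurable (X i)) →
        iIndepFun X μ →
        (∀ i, IsSubExponential μ (X i)) →
        (∀ i, ∫ ω, X i ω ∂μ = 0) →
        ∀ (K : ℝ), 0 < K → (∀ i, subExpNorm μ (X i) ≤ K) →
        ∀ ε : ℝ, 0 ≤ ε →
          μ {ω | |∑ i, X i ω| ≥ ε * N}
            ≤ ENNReal.ofReal (2 * Real.exp (-c * min (ε^2 / K^2) (ε / K) * N)) := by
  refine ⟨(8 * exp 1 ^ 2)⁻¹, by positivity, ?_⟩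
  intro Ω _ μ _ N _ X hXm hind hsub hmean K hK hnorm ε hε
  set t := min (ε / (4 * (exp 1 * K) ^ 2)) (1 / (2 * (exp 1 * K))) with ht
  have ht0 : 0 ≤ t := le_min (by positivity) (by positivity)
  have htK : exp 1 * t * K ≤ 1 / 2 := by
    have : t * (2 * (exp 1 * K)) ≤ 1 := (le_div_iff₀ (by positivity)).1 (min_le_right _ _)
    linarith
  have hpos i := (hsub i).mgf_le (hXm i).aemeasurable (hnorm i) (hmean i) ht0 htK
  have hneg i := (hsub i).neg.mgf_le (hXm i).neg.aemeasurable
    (subExpNorm_neg.trans_le (hnorm i)) (by simp [integral_neg, hmean i]) ht0 htK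
  refine (measure_abs_sum_ge_le_of_mgf_le hXm hind ht0 hpos hneg (ε * N)).trans ?_
  have hexp := neg_mul_add_two_mul_sq_le_of_eq_min
    (by linarith [add_one_le_exp (1 : ℝ)]) hK hε ht
  rw [Fintype.card_fin]
  gcongr
  calc -t * (ε * N) + 2 * (exp 1 * t * K) ^ 2 * N = (-t * ε + 2 * (exp 1 * t * K) ^ 2) * N := by
        ring
    _ ≤ _ := by gcongr
end
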